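/- Let θ_1,...,θ_m be i.i.d. real random variables symmetric about 0, let Ξ be a collection of subsets of {1,...,m} containing the empty set, let signs η_J ∈ {−1,1} with η_∅ = 1, and set C = Σ_{J ∈ Ξ} η_J Π_{j∈J} sin(2θ_j) Π_{j∉J} cos(2θ_j). Then E[C] = κ^m and Var[C] = (Σ_{J ∈ Ξ} μ^{|J|} ν^{m−|J|}) − κ^{2m}, where μ = E[sin²(2θ_1)], ν = E[cos²(2θ_1)], κ = E[cos(2θ_1)]. -/

import Mathlib

open MeasureTheory

section Aux

variable {Ω : Type*} [MeasurableSpace Ω] {μP : Measure Ω} [IsProbabilityMeasure μP]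

lemma aux_prod_integral {ι : Type*} {g : ι → Ω → ℝ}
    (hindep : ProbabilityTheory.iIndepFun g μP)
    (hg : ∀ i, Measurable (g i)) (s : Finset ι) :
    ∫ ω, ∏ j ∈ s, g j ω ∂μP = ∏ j ∈ s, ∫ ω, g j ω ∂μP := by
  classical
  induction s using Finset.induction_on with
  | empty => simp
  | @insert i s hi ih =>
    have hprod : Measurable (∏ j ∈ s, g j) := by
      have h := Finset.measurable_prod s (fun j _ => hg j)
      have heq : (∏ j ∈ s, g j) = fun a => ∏ j ∈ s, g j a := by
        funext a; simp [Finset.prod_apply]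
      rw [heq]; exact h
    have hIndep := hindep.indepFun_finsetProd_of_notMem hg hi
    have h1 := ProbabilityTheory.IndepFun.integral_mul_eq_mul_integral hIndep hprod.aestronglyMeasurable (hg i).aestronglyMeasurable
    calc ∫ ω, ∏ j ∈ insert i s, g j ω ∂μP
        = ∫ ω, ((∏ j ∈ s, g j) * g i) ω ∂μP := by
          congr 1; funext ω
          simp [Finset.prod_insert hi, Finset.prod_apply, mul_comm]
      _ = (∫ ω, (∏ j ∈ s, g j) ω ∂μP) * ∫ ω, g i ω ∂μP := h1
      _ = (∫ ω, ∏ j ∈ s, g j ω ∂μP) * ∫ ω, g i ω ∂μP := by simp [Finset.prod_apply]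
      _ = ∏ j ∈ insert i s, ∫ ω, g j ω ∂μP := by
          rw [Finset.prod_insert hi, ih, mul_comm]

lemma bdd_int {f : Ω → ℝ} (hf : Measurable f) (hb : ∀ ω, |f ω| ≤ 1) :
    Integrable f μP :=
  Integrable.mono' (integrable_const 1) hf.aestronglyMeasurable (Filter.Eventually.of_forall hb)

end Aux

noncomputable section

/-- Auxiliary function: `sin (2 x)` on `J`, `cos (2 x)` off `J`. -/
def φfun {m : ℕ} (J : Finset (Fin m)) (j : Fin m) (x : ℝ) : ℝ :=
  if j ∈ J then Real.sin (2 * x) else Real.cos (2 * x)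

lemma φfun_meas {m : ℕ} (J : Finset (Fin m)) (j : Fin m) : Measurable (φfun J j) := by
  unfold φfun
  split_ifs <;> fun_prop

lemma φfun_abs_le {m : ℕ} (J : Finset (Fin m)) (j : Fin m) (x : ℝ) : |φfun J j x| ≤ 1 := by
  unfold φfun
  split_ifs
  · exact Real.abs_sin_le_one _
  · exact Real.abs_cos_le_one _

theorem stmt_10 {Ω : Type*} [MeasurableSpace Ω] (μP : Measure Ω) [IsProbabilityMeasure μP]
    (m : ℕ) (hm : 0 < m) (θ : Fin m → Ω → ℝ) (hmeas : ∀ j, Measurable (θ j))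
    (hindep : ProbabilityTheory.iIndepFun θ μP)
    (hident : ∀ i j, Measure.map (θ i) μP = Measure.map (θ j) μP)
    (hsymm : ∀ j, Measure.map (θ j) μP = Measure.map (fun ω => - θ j ω) μP)
    (Ξ : Finset (Finset (Fin m))) (hΞ : ∅ ∈ Ξ)
    (η : Finset (Fin m) → ℝ) (hη : ∀ J, η J = 1 ∨ η J = -1) (hη0 : η ∅ = 1)
    (C : Ω → ℝ)
    (hC : ∀ ω, C ω = ∑ J ∈ Ξ,
      η J * (∏ j ∈ J, Real.sin (2 * θ j ω)) * ∏ j ∈ Jᶜ, Real.cos (2 * θ j ω))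
    (μ ν κ : ℝ)
    (hμ : μ = ∫ ω, Real.sin (2 * θ ⟨0, hm⟩ ω) ^ 2 ∂μP)
    (hν : ν = ∫ ω, Real.cos (2 * θ ⟨0, hm⟩ ω) ^ 2 ∂μP)
    (hκ : κ = ∫ ω, Real.cos (2 * θ ⟨0, hm⟩ ω) ∂μP) :
    (∫ ω, C ω ∂μP = κ ^ m) ∧
    (∫ ω, C ω ^ 2 ∂μP) - (∫ ω, C ω ∂μP) ^ 2
      = (∑ J ∈ Ξ, μ ^ J.card * ν ^ (m - J.card)) - κ ^ (2 * m) := by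
  classical
  -- change of variables
  have hint_map : ∀ (f : ℝ → ℝ), Measurable f → ∀ j,
      ∫ ω, f (θ j ω) ∂μP = ∫ x, f x ∂(Measure.map (θ j) μP) := fun f hf j =>
    (integral_map (hmeas j).aemeasurable hf.aestronglyMeasurable).symm
  -- odd functions integrate to zero
  have hodd : ∀ (f : ℝ → ℝ), Measurable f → (∀ x, f (-x) = - f x) → ∀ j,
      ∫ ω, f (θ j ω) ∂μP = 0 := by
    intro f hf hof j
    have h1 : ∫ ω, f (θ j ω) ∂μP = ∫ ω, f (- θ j ω) ∂μP := by
      rw [hint_map f hf j, hsymm j,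
        integral_map (show AEMeasurable (fun ω => - θ j ω) μP from ((hmeas j).neg).aemeasurable) hf.aestronglyMeasurable]
    have h2 : ∫ ω, f (- θ j ω) ∂μP = - ∫ ω, f (θ j ω) ∂μP := by
      simp_rw [hof]
      exact integral_neg _
    linarith [h1.trans h2]
  -- identical distribution
  have hident_int : ∀ (f : ℝ → ℝ), Measurable f → ∀ j,
      ∫ ω, f (θ j ω) ∂μP = ∫ ω, f (θ ⟨0, hm⟩ ω) ∂μP := by
    intro f hf j
    rw [hint_map f hf j, hident j ⟨0, hm⟩, ← hint_map f hf ⟨0, hm⟩]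
  -- single-variable integrals
  have Isin : ∀ j, ∫ ω, Real.sin (2 * θ j ω) ∂μP = 0 := fun j =>
    hodd (fun x => Real.sin (2 * x)) (by fun_prop)
      (fun x => by simp [mul_neg, Real.sin_neg]) j
  have Isc : ∀ j, ∫ ω, Real.sin (2 * θ j ω) * Real.cos (2 * θ j ω) ∂μP = 0 := fun j =>
    hodd (fun x => Real.sin (2 * x) * Real.cos (2 * x)) (by fun_prop)
      (fun x => by simp [mul_neg, Real.sin_neg, Real.cos_neg]) j
  have Ics : ∀ j, ∫ ω, Real.cos (2 * θ j ω) * Real.sin (2 * θ j ω) ∂μP = 0 := fun j =>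
    hodd (fun x => Real.cos (2 * x) * Real.sin (2 * x)) (by fun_prop)
      (fun x => by simp [mul_neg, Real.sin_neg, Real.cos_neg]) j
  have Icos : ∀ j, ∫ ω, Real.cos (2 * θ j ω) ∂μP = κ := fun j => by
    rw [hκ]; exact hident_int (fun x => Real.cos (2 * x)) (by fun_prop) j
  have Isin2 : ∀ j, ∫ ω, Real.sin (2 * θ j ω) * Real.sin (2 * θ j ω) ∂μP = μ := by
    intro j
    calc ∫ ω, Real.sin (2 * θ j ω) * Real.sin (2 * θ j ω) ∂μP
        = ∫ ω, Real.sin (2 * θ ⟨0, hm⟩ ω) * Real.sin (2 * θ ⟨0, hm⟩ ω) ∂μP :=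
          hident_int (fun x => Real.sin (2 * x) * Real.sin (2 * x)) (by fun_prop) j
      _ = μ := by rw [hμ]; congr 1; funext ω; rw [sq]
  have Icos2 : ∀ j, ∫ ω, Real.cos (2 * θ j ω) * Real.cos (2 * θ j ω) ∂μP = ν := by
    intro j
    calc ∫ ω, Real.cos (2 * θ j ω) * Real.cos (2 * θ j ω) ∂μP
        = ∫ ω, Real.cos (2 * θ ⟨0, hm⟩ ω) * Real.cos (2 * θ ⟨0, hm⟩ ω) ∂μP :=
          hident_int (fun x => Real.cos (2 * x) * Real.cos (2 * x)) (by fun_prop) j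
      _ = ν := by rw [hν]; congr 1; funext ω; rw [sq]
  -- key independence lemma in composed form
  have key : ∀ (ψ : Fin m → ℝ → ℝ), (∀ j, Measurable (ψ j)) →
      ∫ ω, ∏ j, ψ j (θ j ω) ∂μP = ∏ j, ∫ ω, ψ j (θ j ω) ∂μP := by
    intro ψ hψ
    have hind2 : ProbabilityTheory.iIndepFun
        (fun j => ψ j ∘ θ j) μP := hindep.comp ψ hψ
    have h := aux_prod_integral hind2 (fun j => (hψ j).comp (hmeas j)) Finset.univ
    simpa [Function.comp] using h
  -- decomposition of the basic products
  have hRdecomp : ∀ (J : Finset (Fin m)) (ω : Ω), (∏ j, φfun J j (θ j ω)) =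
      (∏ j ∈ J, Real.sin (2 * θ j ω)) * ∏ j ∈ Jᶜ, Real.cos (2 * θ j ω) := by
    intro J ω
    rw [← Finset.prod_mul_prod_compl J (fun j => φfun J j (θ j ω))]
    congr 1
    · exact Finset.prod_congr rfl (fun j hj => by simp [φfun, hj])
    · exact Finset.prod_congr rfl (fun j hj => by
        simp [φfun, Finset.mem_compl.mp hj])
  -- measurability / integrability of composed products
  have hintG : ∀ (ψ : Fin m → ℝ → ℝ), (∀ j, Measurable (ψ j)) →
      (∀ j x, |ψ j x| ≤ 1) → Integrable (fun ω => ∏ j, ψ j (θ j ω)) μP := by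
    intro ψ hψ hb
    apply bdd_int
    · exact Finset.measurable_prod (f := fun j ω => ψ j (θ j ω)) Finset.univ
        (fun j _ => (hψ j).comp (hmeas j))
    · intro ω
      rw [Finset.abs_prod]
      exact Finset.prod_le_one (fun j _ => abs_nonneg _) (fun j _ => hb j _)
  have hintR : ∀ J : Finset (Fin m), Integrable (fun ω => ∏ j, φfun J j (θ j ω)) μP :=
    fun J => hintG (fun j => φfun J j) (fun j => φfun_meas J j) (fun j x => φfun_abs_le J j x)
  -- expectation of a single product
  have ER : ∀ J : Finset (Fin m), ∫ ω, ∏ j, φfun J j (θ j ω) ∂μP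
      = if J = ∅ then κ ^ m else 0 := by
    intro J
    rw [key (fun j => φfun J j) (fun j => φfun_meas J j)]
    by_cases hJ : J = ∅
    · subst hJ
      rw [if_pos rfl]
      have hfac : ∀ j : Fin m, ∫ ω, φfun (∅ : Finset (Fin m)) j (θ j ω) ∂μP = κ := by
        intro j
        simp only [φfun, Finset.notMem_empty, if_false]
        exact Icos j
      rw [Finset.prod_congr rfl (fun j _ => hfac j), Finset.prod_const,
        Finset.card_univ, Fintype.card_fin]
    · rw [if_neg hJ]
      obtain ⟨j0, hj0⟩ := Finset.nonempty_iff_ne_empty.mpr hJ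
      apply Finset.prod_eq_zero (Finset.mem_univ j0)
      simp only [φfun, hj0, if_true]
      exact Isin j0
  -- expectation of C
  have hmean : ∫ ω, C ω ∂μP = κ ^ m := by
    have step1 : ∫ ω, C ω ∂μP
        = ∑ J ∈ Ξ, ∫ ω, η J * ∏ j, φfun J j (θ j ω) ∂μP := by
      rw [show (fun ω => C ω) = fun ω => ∑ J ∈ Ξ, η J * ∏ j, φfun J j (θ j ω) from
        funext fun ω => by
          rw [hC ω]
          exact Finset.sum_congr rfl fun J _ => by rw [hRdecomp J ω]; ring]
      exact integral_finset_sum _ (fun J _ => (hintR J).const_mul _)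
    rw [step1]
    have step2 : ∀ J ∈ Ξ, ∫ ω, η J * ∏ j, φfun J j (θ j ω) ∂μP
        = η J * if J = ∅ then κ ^ m else 0 := by
      intro J _
      rw [integral_const_mul, ER J]
    rw [Finset.sum_congr rfl step2,
      Finset.sum_eq_single_of_mem ∅ hΞ (fun J _ hne => by simp [hne])]
    simp [hη0]
  -- pairwise expectations
  have EJK : ∀ J K : Finset (Fin m),
      ∫ ω, ∏ j, φfun J j (θ j ω) * φfun K j (θ j ω) ∂μP
        = if J = K then μ ^ J.card * ν ^ (m - J.card) else 0 := by
    intro J K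
    rw [key (fun j x => φfun J j x * φfun K j x)
      (fun j => (φfun_meas J j).mul (φfun_meas K j))]
    by_cases h : J = K
    · subst h
      rw [if_pos rfl]
      have hfac : ∀ j : Fin m, ∫ ω, φfun J j (θ j ω) * φfun J j (θ j ω) ∂μP
          = if j ∈ J then μ else ν := by
        intro j
        by_cases hj : j ∈ J
        · simp only [φfun, hj, if_true]
          exact Isin2 j
        · simp only [φfun, hj, if_false]
          exact Icos2 j
      rw [Finset.prod_congr rfl (fun j _ => hfac j),
        ← Finset.prod_mul_prod_compl J (fun j => if j ∈ J then μ else ν),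
        Finset.prod_congr rfl (fun j (hj : j ∈ J) => if_pos hj),
        Finset.prod_congr rfl (fun j (hj : j ∈ Jᶜ) => if_neg (Finset.mem_compl.mp hj)),
        Finset.prod_const, Finset.prod_const, Finset.card_compl, Fintype.card_fin]
    · rw [if_neg h]
      obtain ⟨j0, hj0⟩ : ∃ j, ¬(j ∈ J ↔ j ∈ K) := by
        by_contra hcon
        push_neg at hcon
        exact h (Finset.ext fun a => hcon a)
      apply Finset.prod_eq_zero (Finset.mem_univ j0)
      rcases Classical.em (j0 ∈ J) with hJ0 | hJ0
      · have hK0 : j0 ∉ K := fun hk => hj0 ⟨fun _ => hk, fun _ => hJ0⟩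
        simp only [φfun, hJ0, hK0, if_true, if_false]
        exact Isc j0
      · have hK0 : j0 ∈ K := by
          by_contra hk
          exact hj0 ⟨fun h1 => absurd h1 hJ0, fun h2 => absurd h2 hk⟩
        simp only [φfun, hJ0, hK0, if_true, if_false]
        exact Ics j0
  -- second moment
  have hintRR : ∀ J K : Finset (Fin m),
      Integrable (fun ω => ∏ j, φfun J j (θ j ω) * φfun K j (θ j ω)) μP := by
    intro J K
    refine hintG (fun j x => φfun J j x * φfun K j x)
      (fun j => (φfun_meas J j).mul (φfun_meas K j)) (fun j x => ?_)
    rw [abs_mul]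
    calc |φfun J j x| * |φfun K j x| ≤ 1 * 1 :=
          mul_le_mul (φfun_abs_le J j x) (φfun_abs_le K j x) (abs_nonneg _) zero_le_one
      _ = 1 := mul_one 1
  have hsq : ∀ ω, C ω ^ 2 = ∑ J ∈ Ξ, ∑ K ∈ Ξ,
      (η J * η K) * ∏ j, φfun J j (θ j ω) * φfun K j (θ j ω) := by
    intro ω
    rw [hC ω, sq, Finset.sum_mul_sum]
    refine Finset.sum_congr rfl fun J _ => Finset.sum_congr rfl fun K _ => ?_
    rw [Finset.prod_mul_distrib, hRdecomp J ω, hRdecomp K ω]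
    ring
  have hsecond : ∫ ω, C ω ^ 2 ∂μP = ∑ J ∈ Ξ, μ ^ J.card * ν ^ (m - J.card) := by
    have step1 : ∫ ω, C ω ^ 2 ∂μP = ∑ J ∈ Ξ, ∑ K ∈ Ξ,
        ∫ ω, (η J * η K) * ∏ j, φfun J j (θ j ω) * φfun K j (θ j ω) ∂μP := by
      rw [show (fun ω => C ω ^ 2) = fun ω => ∑ J ∈ Ξ, ∑ K ∈ Ξ,
          (η J * η K) * ∏ j, φfun J j (θ j ω) * φfun K j (θ j ω) from funext hsq]
      rw [integral_finset_sum _ (fun J _ =>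
        integrable_finset_sum _ (fun K _ => (hintRR J K).const_mul _))]
      exact Finset.sum_congr rfl fun J _ =>
        integral_finset_sum _ (fun K _ => (hintRR J K).const_mul _)
    rw [step1]
    refine Finset.sum_congr rfl fun J hJ => ?_
    have step2 : ∀ K ∈ Ξ,
        ∫ ω, (η J * η K) * ∏ j, φfun J j (θ j ω) * φfun K j (θ j ω) ∂μP
          = (η J * η K) * if J = K then μ ^ J.card * ν ^ (m - J.card) else 0 := by
      intro K _
      rw [integral_const_mul, EJK J K]
    rw [Finset.sum_congr rfl step2,
      Finset.sum_eq_single_of_mem J hJ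
        (fun K _ hne => by rw [if_neg (fun hh => hne hh.symm), mul_zero])]
    rw [if_pos rfl]
    rcases hη J with h1 | h1 <;> rw [h1] <;> ring
  refine ⟨hmean, ?_⟩
  rw [hsecond, hmean, two_mul, pow_add, ← sq]
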